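/- Let d ≥ 2 and κ ≥ 1 be coprime integers, let a ≥ 1 be an integer, let x_1 > x_2 > … > x_a ≥ 0 be integers, and set n = (Σ_{i=1}^{a} x_i) − a(a−1)/2 (a nonnegative integer). Then π_{κ/d}( ∏_{i=n+1}^{n+d}(q^i − 1) · ∏_{i=2}^{a}(q^{x_1+d} − q^{x_i}) ) − π_{κ/d}( ∏_{i=x_1+1}^{x_1+d}(q^i − 1) · ∏_{i=2}^{a}(q^{x_1} − q^{x_i}) ) = 2κ(n − x_1 + a − 1). -/

import Mathlib

/-!
`π_{κ/d}` is additive on products of nonzero polynomials, and `X^M - X^m = X^m (X^{M-m} - 1)`.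
The complex roots of `X^m - 1` are the `m` simple `m`-th roots of unity, and exactly `⌊mκ/d⌋`
arguments `λ ∈ (0, 2πκ/d]` satisfy `e^{imλ} = 1`, so `π(X^m - 1) = mκ/d + ⌊mκ/d⌋ + 1/2`.
Raising `m` by `d` therefore raises `π(X^m - 1)` by exactly `2κ`. Moving the window of factors
`X^i - 1` from `i ∈ (x_1, x_1 + d]` to `i ∈ (n, n + d]` thus adds `2κ(n - x_1)`, and each of
the `a - 1` factors `X^{x_1} - X^{x_i}` gains `2κ` when `x_1` is raised by `d`.
-/

open Polynomial

/-- `argCount t f` is the cardinality of the multiset `Arg_t(f)` of real numbers `λ` with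
`0 < λ ≤ 2πt` such that `e^{iλ}` is a (complex) root of the real polynomial `f`, each such `λ`
counted with the multiplicity of `e^{iλ}` as a root of `f`. -/
noncomputable def argCount (t : ℝ) (f : Polynomial ℝ) : ℕ :=
  ((f.map (algebraMap ℝ ℂ)).roots.map fun ξ =>
    Nat.card {l : ℝ // 0 < l ∧ l ≤ 2 * Real.pi * t ∧ Complex.exp ((l : ℂ) * Complex.I) = ξ}).sum

/-- `piFn κ d f` is the rational number
`π_{κ/d}(f) = (a(f) + A(f))·(κ/d) + |Arg_{κ/d}(f)| + (1/2)·(multiplicity of 1 as a root of f)`,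
where `a(f)` is the multiplicity of `0` as a root of `f` and `A(f)` is the degree of `f`. -/
noncomputable def piFn (κ d : ℕ) (f : Polynomial ℝ) : ℚ :=
  ((rootMultiplicity 0 f : ℚ) + (f.natDegree : ℚ)) * (κ : ℚ) / (d : ℚ)
    + (argCount ((κ : ℝ) / (d : ℝ)) f : ℚ) + (rootMultiplicity 1 f : ℚ) / 2

open Complex Finset
open scoped Real

lemma X_pow_sub_one_ne_zero {R : Type*} [CommRing R] [Nontrivial R] {m : ℕ} (hm : 0 < m) :
    (X ^ m - 1 : R[X]) ≠ 0 := by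
  simpa using X_pow_sub_C_ne_zero hm (1 : R)

lemma X_pow_sub_X_pow_eq {R : Type*} [CommRing R] {k m : ℕ} (h : k ≤ m) :
    (X ^ m - X ^ k : R[X]) = X ^ k * (X ^ (m - k) - 1) := by
  rw [mul_sub, mul_one, ← pow_add, Nat.add_sub_cancel' h]

lemma X_pow_sub_X_pow_ne_zero {R : Type*} [CommRing R] [IsDomain R] {k m : ℕ} (h : k < m) :
    (X ^ m - X ^ k : R[X]) ≠ 0 := by
  rw [X_pow_sub_X_pow_eq h.le]
  exact mul_ne_zero (pow_ne_zero _ X_ne_zero) (X_pow_sub_one_ne_zero (Nat.sub_pos_of_lt h))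

lemma rootMultiplicity_one_X_pow_sub_one {F : Type*} [Field F] [CharZero F] {m : ℕ} (hm : 0 < m) :
    rootMultiplicity 1 (X ^ m - 1 : F[X]) = 1 := by
  refine le_antisymm (rootMultiplicity_le_one_of_separable
    (X_pow_sub_one_separable_iff.2 (Nat.cast_ne_zero.2 hm.ne')) 1) ?_
  exact (rootMultiplicity_pos (X_pow_sub_one_ne_zero hm)).2 (by simp)

lemma exp_mul_I_pow_eq_one_iff {l : ℝ} {m : ℕ} :
    exp (l * I) ^ m = 1 ↔ ∃ j : ℤ, (m : ℝ) * l = 2 * π * j := by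
  rw [← exp_nat_mul, Complex.exp_eq_one_iff]
  refine exists_congr fun j => ?_
  rw [← mul_assoc, show (j : ℂ) * (2 * π * I) = ((2 * π * j : ℝ) : ℂ) * I by push_cast; ring,
    mul_left_inj' I_ne_zero, ← ofReal_natCast, ← ofReal_mul, ofReal_inj]

noncomputable def rootOfUnityArgs (t : ℝ) (m : ℕ) : Finset ℝ :=
  (Ioc 0 ⌊m * t⌋).image fun j : ℤ => 2 * π * j / m

lemma mem_rootOfUnityArgs {t l : ℝ} {m : ℕ} (hm : 0 < m) :
    l ∈ rootOfUnityArgs t m ↔ 0 < l ∧ l ≤ 2 * π * t ∧ exp (l * I) ^ m = 1 := by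
  have hm' : (0 : ℝ) < m := by exact_mod_cast hm
  simp only [rootOfUnityArgs, mem_image, mem_Ioc, Int.le_floor, exp_mul_I_pow_eq_one_iff]
  constructor
  · rintro ⟨j, ⟨hj0, hjt⟩, rfl⟩
    have hj0' : (0 : ℝ) < j := by exact_mod_cast hj0
    refine ⟨by positivity, ?_, j, by field_simp⟩
    rw [div_le_iff₀ hm']
    nlinarith [Real.pi_pos]
  · rintro ⟨hl0, hlt, j, hj⟩
    refine ⟨j, ⟨?_, ?_⟩, by field_simp; linarith⟩
    · have : (0 : ℝ) < j := by nlinarith [Real.pi_pos]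
      exact_mod_cast this
    · nlinarith [Real.pi_pos]

lemma card_rootOfUnityArgs (t : ℝ) {m : ℕ} (hm : 0 < m) :
    #(rootOfUnityArgs t m) = ⌊m * t⌋₊ := by
  have hinj : Function.Injective fun j : ℤ => 2 * π * j / m := by
    intro i j h
    have hm' : (m : ℝ) ≠ 0 := by positivity
    simpa [hm', Real.pi_ne_zero] using h
  rw [rootOfUnityArgs, card_image_of_injective _ hinj, Int.card_Ioc, sub_zero, Int.floor_toNat]

lemma argCount_X_pow_sub_one (t : ℝ) {m : ℕ} (hm : 0 < m) :
    argCount t (X ^ m - 1) = ⌊m * t⌋₊ := by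
  classical
  set p : ℂ[X] := (X ^ m - 1 : ℝ[X]).map (algebraMap ℝ ℂ)
  have hp : p = X ^ m - 1 := by simp [p]
  have hp0 : p ≠ 0 := hp ▸ X_pow_sub_one_ne_zero hm
  have hnd : p.roots.Nodup :=
    nodup_roots (hp ▸ X_pow_sub_one_separable_iff.2 (by exact_mod_cast hm.ne'))
  have hmem : ∀ ξ, ξ ∈ p.roots ↔ ξ ^ m = 1 := fun ξ => by
    rw [mem_roots hp0, hp, IsRoot, eval_sub, eval_pow, eval_X, eval_one, sub_eq_zero]
  let roots : Finset ℂ := ⟨p.roots, hnd⟩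
  calc argCount t (X ^ m - 1)
      = ∑ ξ ∈ roots, Nat.card {l : ℝ // 0 < l ∧ l ≤ 2 * π * t ∧ exp (l * I) = ξ} := rfl
    _ = ∑ ξ ∈ roots, #((rootOfUnityArgs t m).filter fun l : ℝ => exp (l * I) = ξ) := by
        refine sum_congr rfl fun ξ hξ => ?_
        rw [← Set.ncard_coe_finset, ← Nat.card_coe_set_eq]
        have hξ' : ξ ^ m = 1 := (hmem ξ).1 hξ
        congr
        ext l
        simp only [Set.mem_ofPred_eq, coe_filter, mem_rootOfUnityArgs hm]
        exact ⟨fun ⟨h0, ht, h⟩ => ⟨⟨h0, ht, h ▸ hξ'⟩, h⟩, fun ⟨⟨h0, ht, _⟩, h⟩ => ⟨h0, ht, h⟩⟩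
    _ = #(rootOfUnityArgs t m) := (card_eq_sum_card_fiberwise fun _ hl =>
        (hmem _).2 ((mem_rootOfUnityArgs hm).1 hl).2.2).symm
    _ = ⌊m * t⌋₊ := card_rootOfUnityArgs t hm

lemma argCount_mul (t : ℝ) {f g : ℝ[X]} (hf : f ≠ 0) (hg : g ≠ 0) :
    argCount t (f * g) = argCount t f + argCount t g := by
  rw [argCount, argCount, argCount, Polynomial.map_mul,
    roots_mul (mul_ne_zero (map_ne_zero hf) (map_ne_zero hg)), Multiset.map_add, Multiset.sum_add]

section piFn

variable (κ d : ℕ)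

lemma piFn_mul {f g : ℝ[X]} (hf : f ≠ 0) (hg : g ≠ 0) :
    piFn κ d (f * g) = piFn κ d f + piFn κ d g := by
  rw [piFn, piFn, piFn, rootMultiplicity_mul (mul_ne_zero hf hg),
    rootMultiplicity_mul (mul_ne_zero hf hg), natDegree_mul hf hg, argCount_mul _ hf hg]
  push_cast
  ring

lemma piFn_prod {ι : Type*} (s : Finset ι) (f : ι → ℝ[X]) (hf : ∀ i ∈ s, f i ≠ 0) :
    piFn κ d (∏ i ∈ s, f i) = ∑ i ∈ s, piFn κ d (f i) := by
  induction s using Finset.cons_induction with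
  | empty => simp [piFn, argCount, rootMultiplicity_eq_zero]
  | cons i s hi ih =>
    rw [prod_cons, sum_cons, piFn_mul κ d (hf i (mem_cons_self i s))
        (prod_ne_zero_iff.2 fun j hj => hf j (mem_cons_of_mem hj)),
      ih fun j hj => hf j (mem_cons_of_mem hj)]

lemma piFn_X_pow_sub_one {m : ℕ} (hm : 0 < m) :
    piFn κ d (X ^ m - 1) = (m * κ / d : ℚ) + (m * κ / d : ℕ) + 1 / 2 := by
  have h0 : rootMultiplicity 0 (X ^ m - 1 : ℝ[X]) = 0 :=
    rootMultiplicity_eq_zero (by simp [hm.ne'])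
  have harg : argCount (κ / d) (X ^ m - 1) = m * κ / d := by
    rw [argCount_X_pow_sub_one _ hm, mul_div_assoc', ← Nat.cast_mul, Nat.floor_div_natCast,
      Nat.floor_natCast]
  rw [piFn, h0, harg, rootMultiplicity_one_X_pow_sub_one hm, ← C_1, natDegree_X_pow_sub_C]
  push_cast
  ring

lemma piFn_X_pow_add_sub_one (hd : 0 < d) {m : ℕ} (hm : 0 < m) :
    piFn κ d (X ^ (m + d) - 1) = piFn κ d (X ^ m - 1) + 2 * κ := by
  rw [piFn_X_pow_sub_one κ d (by omega), piFn_X_pow_sub_one κ d hm, add_mul,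
    Nat.add_mul_div_left _ _ hd]
  push_cast
  field_simp
  ring

lemma piFn_X_pow_add_sub_X_pow (hd : 0 < d) {k m : ℕ} (h : k < m) :
    piFn κ d (X ^ (m + d) - X ^ k) = piFn κ d (X ^ m - X ^ k) + 2 * κ := by
  have hX : (X ^ k : ℝ[X]) ≠ 0 := pow_ne_zero _ X_ne_zero
  rw [X_pow_sub_X_pow_eq (by omega), X_pow_sub_X_pow_eq h.le,
    piFn_mul κ d hX (X_pow_sub_one_ne_zero (by omega)),
    piFn_mul κ d hX (X_pow_sub_one_ne_zero (by omega)), Nat.sub_add_comm h.le,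
    piFn_X_pow_add_sub_one κ d hd (Nat.sub_pos_of_lt h), add_assoc]

end piFn

lemma sum_Ioc_add_eq_of_map_add {M : Type*} [AddCancelCommMonoid M] {g : ℕ → M} {c : M} {d : ℕ}
    (hg : ∀ i, 0 < i → g (i + d) = g i + c) (m : ℕ) :
    ∑ i ∈ Ioc m (m + d), g i = ∑ i ∈ Ioc 0 d, g i + m • c := by
  induction m with
  | zero => simp
  | succ m ih =>
    have h1 := sum_Ioc_consecutive g (Nat.le_add_right m 1) (by omega : m + 1 ≤ m + d + 1)
    have h2 := sum_Ioc_succ_top (by omega : m ≤ m + d) g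
    have hg' : g (m + d + 1) = g (m + 1) + c := by
      rw [add_right_comm]
      exact hg (m + 1) m.succ_pos
    rw [Nat.Ioc_succ_singleton, sum_singleton] at h1
    have key : g (m + 1) + ∑ i ∈ Ioc (m + 1) (m + d + 1), g i
        = g (m + 1) + (∑ i ∈ Ioc m (m + d), g i + c) := by
      rw [h1, h2, hg']
      abel
    rw [add_right_comm m 1 d, add_left_cancel key, ih, succ_nsmul, add_assoc]

lemma lt_apply_one_of_succ_lt {β : Type*} [Preorder β] {x : ℕ → β} {a : ℕ}
    (hx : ∀ i, 1 ≤ i → i < a → x (i + 1) < x i) {i : ℕ} (hi : i ∈ Icc 2 a) : x i < x 1 := by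
  have hanti : StrictAntiOn x (Set.Icc 1 a) :=
    strictAntiOn_of_succ_lt Set.ordConnected_Icc fun j _ hj hsj => by
      rw [Order.succ_eq_add_one] at hsj ⊢
      exact hx j hj.1 (by grind)
  rw [mem_Icc] at hi
  exact hanti ⟨le_rfl, by omega⟩ ⟨by omega, hi.2⟩ (by omega)

theorem piFn_GL_min_general (κ d : ℕ) (hd : 2 ≤ d)
    (a : ℕ) (ha : 1 ≤ a) (x : ℕ → ℕ)
    (hx : ∀ i, 1 ≤ i → i < a → x (i + 1) < x i)
    (n : ℕ) :
    piFn κ d ((∏ i ∈ Finset.Ioc n (n + d), (X ^ i - 1)) *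
          ∏ i ∈ Finset.Icc 2 a, (X ^ (x 1 + d) - X ^ x i)) -
        piFn κ d ((∏ i ∈ Finset.Ioc (x 1) (x 1 + d), (X ^ i - 1)) *
          ∏ i ∈ Finset.Icc 2 a, (X ^ (x 1) - X ^ x i)) =
      2 * (κ : ℚ) * ((n : ℚ) - (x 1 : ℚ) + (a : ℚ) - 1) := by
  have hd0 : 0 < d := by omega
  have hlt : ∀ i ∈ Icc 2 a, x i < x 1 := fun i hi => lt_apply_one_of_succ_lt hx hi
  have hcyc : ∀ m, ∀ i ∈ Ioc m (m + d), (X ^ i - 1 : ℝ[X]) ≠ 0 := fun m i hi =>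
    X_pow_sub_one_ne_zero ((Nat.zero_le m).trans_lt (mem_Ioc.1 hi).1)
  have hgap : ∀ M ≥ x 1, ∀ i ∈ Icc 2 a, (X ^ M - X ^ x i : ℝ[X]) ≠ 0 := fun M hM i hi =>
    X_pow_sub_X_pow_ne_zero ((hlt i hi).trans_le hM)
  have hgap_d := hgap _ (Nat.le_add_right (x 1) d)
  have hgap_0 := hgap _ le_rfl
  have hcyc_sum : ∀ m, ∑ i ∈ Ioc m (m + d), piFn κ d (X ^ i - 1) =
      ∑ i ∈ Ioc 0 d, piFn κ d (X ^ i - 1) + m • (2 * κ : ℚ) :=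
    sum_Ioc_add_eq_of_map_add fun i hi => piFn_X_pow_add_sub_one κ d hd0 hi
  have hgap_sum : ∑ i ∈ Icc 2 a, piFn κ d (X ^ (x 1 + d) - X ^ x i) =
      ∑ i ∈ Icc 2 a, piFn κ d (X ^ x 1 - X ^ x i) + (a - 1) • (2 * κ : ℚ) := by
    rw [sum_congr rfl fun i hi => piFn_X_pow_add_sub_X_pow κ d hd0 (hlt i hi), sum_add_distrib,
      sum_const, Nat.card_Icc, Nat.add_sub_add_right]
  rw [piFn_mul κ d (prod_ne_zero_iff.2 (hcyc n)) (prod_ne_zero_iff.2 hgap_d),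
    piFn_mul κ d (prod_ne_zero_iff.2 (hcyc _)) (prod_ne_zero_iff.2 hgap_0),
    piFn_prod κ d _ _ (hcyc n), piFn_prod κ d _ _ (hcyc _), piFn_prod κ d _ _ hgap_d,
    piFn_prod κ d _ _ hgap_0, hcyc_sum, hcyc_sum, hgap_sum]
  simp only [nsmul_eq_mul, Nat.cast_sub ha, Nat.cast_one]
  ring

/-- Section 9 (linear groups): for a β-set `x 1 > x 2 > … > x a ≥ 0` of a partition of
`n = Σ x_i − a(a−1)/2`,
`π_{κ/d}(∏_{i=n+1}^{n+d}(q^i−1)·∏_{i=2}^{a}(q^{x_1+d}−q^{x_i}))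
 − π_{κ/d}(∏_{i=x_1+1}^{x_1+d}(q^i−1)·∏_{i=2}^{a}(q^{x_1}−q^{x_i})) = 2κ(n − x_1 + a − 1)`. -/
theorem piFn_GL_min (κ d : ℕ) (hd : 2 ≤ d) (hκ : 1 ≤ κ) (hcop : Nat.Coprime κ d)
    (a : ℕ) (ha : 1 ≤ a) (x : ℕ → ℕ)
    (hx : ∀ i, 1 ≤ i → i < a → x (i + 1) < x i)
    (n : ℕ)
    (hn : 2 * (n : ℤ) = 2 * (∑ i ∈ Finset.Icc 1 a, (x i : ℤ)) - (a : ℤ) * ((a : ℤ) - 1)) :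
    piFn κ d ((∏ i ∈ Finset.Ioc n (n + d), (X ^ i - 1)) *
          ∏ i ∈ Finset.Icc 2 a, (X ^ (x 1 + d) - X ^ x i)) -
        piFn κ d ((∏ i ∈ Finset.Ioc (x 1) (x 1 + d), (X ^ i - 1)) *
          ∏ i ∈ Finset.Icc 2 a, (X ^ (x 1) - X ^ x i)) =
      2 * (κ : ℚ) * ((n : ℚ) - (x 1 : ℚ) + (a : ℚ) - 1) :=
  piFn_GL_min_general κ d hd a ha x hx n
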